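/- Let d ≥ 1 be an integer, T ≥ 1 an integer, and π_1 ≥ π_2 ≥ … ≥ π_d > 0 real numbers. For η > 0 define L(η) = Σ_{k=1}^d ℓ_k(η), where ℓ_k(η) = (π_k − T·η)² if π_k ≥ T·η and ℓ_k(η) = η²/4 otherwise. Then every global minimizer η* of L on (0, ∞) satisfies π_d/T ≤ η* ≤ π_1/T. -/
import Mathlib


/-- Range of the optimal step size for idealized sign descent: any global
minimizer `η*` over `(0,∞)` of the loss after `T` steps satisfies
`π_d/T ≤ η* ≤ π_1/T`. -/
theorem stmt12 (d : ℕ) (hd : 0 < d) (T : ℕ) (hT : 1 ≤ T)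
    (π : Fin d → ℝ)
    (hmono : ∀ i j : Fin d, i ≤ j → π j ≤ π i)
    (hpos : ∀ i, 0 < π i)
    (L : ℝ → ℝ)
    (hL : ∀ η, L η = ∑ k : Fin d,
      if (T : ℝ) * η ≤ π k then (π k - (T : ℝ) * η) ^ 2 else η ^ 2 / 4)
    (ηstar : ℝ) (hηstar : ηstar ∈ Set.Ioi (0 : ℝ))
    (hmin : ∀ η ∈ Set.Ioi (0 : ℝ), L ηstar ≤ L η) :
    π ⟨d - 1, by omega⟩ / T ≤ ηstar ∧ ηstar ≤ π ⟨0, hd⟩ / T := by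
  have hη0 : (0:ℝ) < ηstar := hηstar
  have hT0 : (0:ℝ) < (T:ℝ) := by exact_mod_cast (by omega : 0 < T)
  haveI : Nonempty (Fin d) := ⟨⟨0, hd⟩⟩
  constructor
  · by_contra hlt
    push_neg at hlt
    set pd := π ⟨d - 1, by omega⟩ with hpd
    have hη' : (0:ℝ) < pd / T := div_pos (hpos _) hT0
    have hspec := hmin (pd / T) (Set.mem_Ioi.mpr hη')
    have hTη' : (T:ℝ) * (pd / T) = pd := by field_simp
    have hst : (T:ℝ) * ηstar < pd := by
      have := (lt_div_iff₀ hT0).mp hlt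
      nlinarith
    have key : L (pd / T) < L ηstar := by
      rw [hL, hL]
      apply Finset.sum_lt_sum_of_nonempty Finset.univ_nonempty
      intro k _
      have hk : pd ≤ π k := hmono k ⟨d - 1, by omega⟩ (by
        simp [Fin.le_def]; omega)
      rw [hTη']
      rw [if_pos hk, if_pos (by linarith)]
      nlinarith
    linarith
  · by_contra hgt
    push_neg at hgt
    set p1 := π ⟨0, hd⟩ with hp1
    have hη' : (0:ℝ) < p1 / T := div_pos (hpos _) hT0
    have hspec := hmin (p1 / T) (Set.mem_Ioi.mpr hη')
    have hTη' : (T:ℝ) * (p1 / T) = p1 := by field_simp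
    have hst : p1 < (T:ℝ) * ηstar := by
      have := (div_lt_iff₀ hT0).mp hgt; nlinarith
    have key : L (p1 / T) < L ηstar := by
      rw [hL, hL]
      apply Finset.sum_lt_sum_of_nonempty Finset.univ_nonempty
      intro k _
      have hk : π k ≤ p1 := hmono ⟨0, hd⟩ k (by simp [Fin.le_def])
      rw [hTη', if_neg (show ¬ ((T:ℝ) * ηstar ≤ π k) by push_neg; linarith)]
      split_ifs with h
      · have : π k = p1 := le_antisymm hk h
        rw [this]
        simp only [sub_self]
        nlinarith
      · have h1 : p1 / T < ηstar := hgt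
        nlinarith
    linarith
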